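/- There exists c_u^h with 13.15 < c_u^h < 13.16 such that ω^h(c_u^h) + c_u^h/6 = 2·ln 3. -/

import Mathlib

/-!
The bracket maximised in `ω^h` (the objective) is `1/2`-Lipschitz in `c`, uniformly in `t`, so
`ω^h` is too and `c ↦ ω^h(c) + c/6` is continuous. By the intermediate value theorem it remains to see that this
function lies below `2 ln 3` at `c = 13.15` and above it at `c = 13.16`. The objective peaks
near `t ≈ 0.015` with value `≈ 0.0049`; at `13.16` evaluating it at `t = 0.015` suffices, while
at `13.15` it is bounded by `0.0053` on all of `(0, 1)` using low-order Taylor expansions of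
`exp` and `log` near the peak and cruder bounds further out.
-/

/-- ω^h(c) = sup_{t∈(0,1)} [ (c/6)·t² − (c/3)·t − (1−t)·ln 2 + ln(3 − e^{−2ct/3}) ] -/
noncomputable def omegaH (c : ℝ) : ℝ :=
  sSup ((fun t => (c / 6) * t ^ 2 - (c / 3) * t - (1 - t) * Real.log 2 +
      Real.log (3 - Real.exp (-2 * c * t / 3))) '' Set.Ioo (0 : ℝ) 1)

open Real Set

lemma log_three_bounds : 1.098612276 < log 3 ∧ log 3 < 1.09861230 := by
  have h := abs_log_sub_add_sum_range_le (x := 1 / 3) (by norm_num [abs_of_pos]) 16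
  rw [abs_of_pos (by norm_num : (0 : ℝ) < 1 / 3), show (1 : ℝ) - 1 / 3 = 2 / 3 by norm_num,
    log_div two_ne_zero three_ne_zero] at h
  simp only [Finset.sum_range_succ] at h
  norm_num at h
  have := abs_le.1 h
  constructor <;> nlinarith [log_two_gt_d9, log_two_lt_d9]

lemma abs_exp_sub_taylor_le {x : ℝ} (hx : |x| ≤ 1) :
    |exp x - (1 + x + x ^ 2 / 2 + x ^ 3 / 6)| ≤ 5 / 96 * x ^ 4 := by
  have h := Real.exp_bound hx (n := 4) (by norm_num)
  simp only [Finset.sum_range_succ] at h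
  norm_num [Nat.factorial] at h
  rwa [pow_abs, abs_of_nonneg (by positivity : 0 ≤ x ^ 4), mul_comm] at h

lemma exp_neg_taylor_bounds {u : ℝ} (hu : |u| ≤ 1) :
    1 - u + u ^ 2 / 2 - u ^ 3 / 6 - 5 / 96 * u ^ 4 ≤ exp (-u) ∧
      exp (-u) ≤ 1 - u + u ^ 2 / 2 - u ^ 3 / 6 + 5 / 96 * u ^ 4 := by
  have h := abs_le.1 (abs_exp_sub_taylor_le (x := -u) (by rwa [abs_neg]))
  constructor <;> nlinarith [h.1, h.2]

lemma abs_log_one_add_sub_taylor_le {x : ℝ} (hx : |x| < 1) :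
    |log (1 + x) - (x - x ^ 2 / 2 + x ^ 3 / 3)| ≤ |x| ^ 4 / (1 - |x|) := by
  have h := abs_log_sub_add_sum_range_le (x := -x) (by rwa [abs_neg]) 3
  simp only [Finset.sum_range_succ, abs_neg, sub_neg_eq_add] at h
  norm_num at h
  rwa [show log (1 + x) - (x - x ^ 2 / 2 + x ^ 3 / 3) = -x + x ^ 2 / 2 + (-x) ^ 3 / 3 + log (1 + x)
    by ring]

lemma exp_neg_sub_exp_neg_le {a b : ℝ} (ha : 0 ≤ a) (hab : a ≤ b) :
    exp (-a) - exp (-b) ≤ b - a := by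
  have hsplit : exp (-b) = exp (-a) * exp (-(b - a)) := by rw [← exp_add]; ring_nf
  have htangent : 1 - (b - a) ≤ exp (-(b - a)) := by linarith [add_one_le_exp (-(b - a))]
  have hle_one : exp (-a) ≤ 1 := exp_le_one_iff.2 (by linarith)
  nlinarith [exp_pos (-a)]

lemma log_three_sub_exp_neg_le {a b : ℝ} (ha : 0 ≤ a) (hb : 0 ≤ b) :
    log (3 - exp (-a)) ≤ log (3 - exp (-b)) + |a - b| / 2 := by
  have hpos : ∀ x, 0 ≤ x → 0 < 3 - exp (-x) := fun x hx => by
    linarith [exp_le_one_iff.2 (neg_nonpos.2 hx)]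
  rcases le_total a b with hab | hba
  · have : exp (-b) ≤ exp (-a) := exp_le_exp.2 (by linarith)
    have := log_le_log (hpos a ha) (by linarith : 3 - exp (-a) ≤ 3 - exp (-b))
    linarith [abs_nonneg (a - b)]
  · have hquot := log_le_sub_one_of_pos (div_pos (hpos a ha) (hpos b hb))
    rw [log_div (hpos a ha).ne' (hpos b hb).ne'] at hquot
    have hlip := exp_neg_sub_exp_neg_le hb hba
    have hb3 : 2 ≤ 3 - exp (-b) := by linarith [exp_le_one_iff.2 (neg_nonpos.2 hb)]
    have : (3 - exp (-a)) / (3 - exp (-b)) - 1 ≤ (a - b) / 2 := by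
      rw [div_sub_one (hpos b hb).ne', div_le_div_iff₀ (hpos b hb) two_pos]
      nlinarith
    rw [abs_of_nonneg (sub_nonneg.2 hba)]
    linarith

noncomputable def omegaHObjective (c t : ℝ) : ℝ :=
  (c / 6) * t ^ 2 - (c / 3) * t - (1 - t) * log 2 + log (3 - exp (-2 * c * t / 3))

lemma omegaHObjective_le_log_three {c t : ℝ} (hc : 0 ≤ c) (ht : t ∈ Ioo (0 : ℝ) 1) :
    omegaHObjective c t ≤ log 3 := by
  obtain ⟨ht0, ht1⟩ := ht
  have hexp : 0 < exp (-2 * c * t / 3) := exp_pos _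
  have hlog : log (3 - exp (-2 * c * t / 3)) ≤ log 3 := log_le_log (by
    linarith [exp_le_one_iff.2 (by nlinarith : -2 * c * t / 3 ≤ 0)]) (by linarith)
  have hquad : (c / 6) * t ^ 2 - (c / 3) * t ≤ 0 := by nlinarith [mul_nonneg hc ht0.le]
  have hlog2 : 0 ≤ (1 - t) * log 2 := mul_nonneg (by linarith) (log_nonneg one_le_two)
  unfold omegaHObjective
  linarith

lemma omegaHObjective_le_add {c₁ c₂ t : ℝ} (hc₁ : 0 ≤ c₁) (hc₂ : 0 ≤ c₂)
    (ht : t ∈ Ioo (0 : ℝ) 1) :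
    omegaHObjective c₁ t ≤ omegaHObjective c₂ t + |c₁ - c₂| / 2 := by
  obtain ⟨ht0, ht1⟩ := ht
  have hlog := log_three_sub_exp_neg_le (a := 2 * c₁ * t / 3) (b := 2 * c₂ * t / 3)
    (by positivity) (by positivity)
  have harg : 2 * c₁ * t / 3 - 2 * c₂ * t / 3 = (2 * t / 3) * (c₁ - c₂) := by ring
  rw [harg, abs_mul, abs_of_pos (by positivity : 0 < 2 * t / 3)] at hlog
  have hquad : (c₁ - c₂) * (t ^ 2 / 6 - t / 3) ≤ |c₁ - c₂| / 6 := by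
    have : |t ^ 2 / 6 - t / 3| ≤ 1 / 6 := abs_le.2 ⟨by nlinarith, by nlinarith⟩
    calc (c₁ - c₂) * (t ^ 2 / 6 - t / 3) ≤ |c₁ - c₂| * |t ^ 2 / 6 - t / 3| := by
          rw [← abs_mul]; exact le_abs_self _
      _ ≤ |c₁ - c₂| / 6 := by nlinarith [abs_nonneg (c₁ - c₂)]
  have hlin : (2 * t / 3) * |c₁ - c₂| / 2 ≤ |c₁ - c₂| / 3 := by nlinarith [abs_nonneg (c₁ - c₂)]
  simp only [omegaHObjective, neg_mul, neg_div] at hlog ⊢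
  nlinarith

lemma bddAbove_omegaHObjective_image {c : ℝ} (hc : 0 ≤ c) :
    BddAbove (omegaHObjective c '' Ioo 0 1) := by
  refine ⟨log 3, ?_⟩
  rintro _ ⟨t, ht, rfl⟩
  exact omegaHObjective_le_log_three hc ht

lemma omegaHObjective_le_omegaH {c t : ℝ} (hc : 0 ≤ c) (ht : t ∈ Ioo (0 : ℝ) 1) :
    omegaHObjective c t ≤ omegaH c :=
  le_csSup (bddAbove_omegaHObjective_image hc) (mem_image_of_mem _ ht)

lemma omegaH_le {c b : ℝ} (h : ∀ t ∈ Ioo (0 : ℝ) 1, omegaHObjective c t ≤ b) :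
    omegaH c ≤ b :=
  csSup_le ((nonempty_Ioo.2 zero_lt_one).image _) (forall_mem_image.2 h)

lemma lipschitzOnWith_omegaH : LipschitzOnWith (1 / 2) omegaH (Ici 0) := by
  refine LipschitzOnWith.of_le_add_mul _ fun c₁ hc₁ c₂ hc₂ => omegaH_le fun t ht => ?_
  have := omegaHObjective_le_add hc₁ hc₂ ht
  have := omegaHObjective_le_omegaH hc₂ ht
  rw [Real.dist_eq]
  push_cast
  linarith

/-- The objective at `c = 13.15` near its peak, after the substitution `u = 2ct/3` and with
`X = (1 - exp (-u)) / 2`, so that `log (3 - exp (-u)) = log 2 + log (1 + X)`. -/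
lemma taylor_majorant_le {u X : ℝ} (hu0 : 0 < u) (hu1 : u ≤ 0.57)
    (hXlo : (u - u ^ 2 / 2) / 2 ≤ X) (hXhi : X ≤ (u - u ^ 2 / 2 + u ^ 3 / 6 + 5 / 96 * u ^ 4) / 2) :
    (15 / 526) * u ^ 2 - u / 2 + (30 / 263) * 0.6931471808 * u +
      (X - X ^ 2 / 2 + X ^ 3 / 3 + 1.4 * X ^ 4) ≤ 0.0053 := by
  have hu0' := hu0.le
  have hq : (0 : ℝ) ≤ 1 / 2 - u / 6 - 5 / 96 * u ^ 2 := by nlinarith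
  have hXu : X ≤ u / 2 := hXhi.trans (by nlinarith [mul_nonneg (sq_nonneg u) hq])
  have hX0 : 0 ≤ X := le_trans (by nlinarith) hXlo
  have h2 : -(X ^ 2) / 2 ≤ -(((u - u ^ 2 / 2) / 2) ^ 2) / 2 := by
    nlinarith [mul_nonneg (sub_nonneg.2 hXlo) (by nlinarith : (0 : ℝ) ≤ (u - u ^ 2 / 2) / 2 + X)]
  have h3 : X ^ 3 ≤ (u / 2) ^ 3 := pow_le_pow_left₀ hX0 hXu 3
  have h4 : X ^ 4 ≤ (u / 2) ^ 4 := pow_le_pow_left₀ hX0 hXu 4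
  nlinarith [sq_nonneg (u - 0.135), mul_nonneg (mul_nonneg hu0' hu0') hu0',
    mul_nonneg hu0' (sub_nonneg.2 hu1), sq_nonneg (u * (u - 0.135)),
    mul_nonneg (mul_nonneg hu0' hu0') (sub_nonneg.2 hu1),
    mul_nonneg (mul_nonneg (mul_nonneg hu0' hu0') hu0') (sub_nonneg.2 hu1)]

lemma omegaHObjective_13_15_le_of_mem_Ioc {t : ℝ} (ht : t ∈ Ioc 0 0.065) :
    omegaHObjective 13.15 t ≤ 0.0053 := by
  set u : ℝ := 263 / 30 * t with hu
  have hu0 : 0 < u := by linarith [ht.1]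
  have hu1 : u ≤ 0.57 := by linarith [ht.2]
  obtain ⟨hexp_lo, hexp_hi⟩ := exp_neg_taylor_bounds (u := u) (by rw [abs_of_pos hu0]; linarith)
  set X : ℝ := (1 - exp (-u)) / 2 with hX
  have hXlo : (u - u ^ 2 / 2) / 2 ≤ X := by nlinarith [pow_nonneg hu0.le 4]
  have hXhi : X ≤ (u - u ^ 2 / 2 + u ^ 3 / 6 + 5 / 96 * u ^ 4) / 2 := by linarith
  have hX0 : 0 ≤ X := le_trans (by nlinarith) hXlo
  have hX27 : X ≤ 2 / 7 := by linarith [add_one_le_exp (-u)]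
  have hlog : log (1 + X) ≤ X - X ^ 2 / 2 + X ^ 3 / 3 + 1.4 * X ^ 4 := by
    have hX1 : |X| < 1 := by rw [abs_of_nonneg hX0]; linarith
    have h := (abs_le.1 (abs_log_one_add_sub_taylor_le hX1)).2
    rw [abs_of_nonneg hX0] at h
    have hrem : X ^ 4 / (1 - X) ≤ 1.4 * X ^ 4 := by
      rw [div_le_iff₀ (by linarith)]
      nlinarith [pow_nonneg hX0 4]
    linarith
  have hsplit : log (3 - exp (-u)) = log 2 + log (1 + X) := by
    rw [← log_mul two_ne_zero (by linarith), hX]; ring_nf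
  have hobj : omegaHObjective 13.15 t =
      (15 / 526) * u ^ 2 - u / 2 + (30 / 263) * log 2 * u + log (1 + X) := by
    rw [omegaHObjective, show -2 * (13.15 : ℝ) * t / 3 = -u by rw [hu]; ring, hsplit,
      show t = 30 / 263 * u by rw [hu]; ring]
    ring
  have hlog2 : (30 / 263) * log 2 * u ≤ (30 / 263) * 0.6931471808 * u := by
    have := log_two_lt_d9; gcongr
  linarith [taylor_majorant_le hu0 hu1 hXlo hXhi]

lemma omegaHObjective_13_15_le_of_mem_Icc {t : ℝ} (ht : t ∈ Icc 0.065 0.2) :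
    omegaHObjective 13.15 t ≤ 0.0053 := by
  obtain ⟨ht0, ht1⟩ := ht
  set s : ℝ := exp (-2 * 13.15 * t / 3) with hs
  have hs1 : s < 1 := exp_lt_one_iff.2 (by linarith)
  have hsq : (1 - 263 / 60 * t) ^ 2 ≤ s := by
    have hhalf : 1 - 263 / 60 * t ≤ exp (-(263 / 60 * t)) := by
      linarith [add_one_le_exp (-(263 / 60 * t))]
    calc (1 - 263 / 60 * t) ^ 2 ≤ exp (-(263 / 60 * t)) ^ 2 := by
          gcongr; linarith
      _ = s := by rw [hs, ← exp_nat_mul]; ring_nf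
  have hlog : log (3 - s) ≤ log 3 - s / 3 := by
    have := log_le_sub_one_of_pos (show (0 : ℝ) < (3 - s) / 3 by linarith)
    rw [log_div (by linarith) three_ne_zero] at this
    linarith
  have htl2 : t * log 2 ≤ t * 0.6931471808 := by have := log_two_lt_d9; gcongr
  rw [omegaHObjective, ← hs]
  nlinarith [sq_nonneg (t - 0.065), log_two_gt_d9, log_three_bounds.2]

lemma omegaHObjective_13_15_le_of_mem_Ico {t : ℝ} (ht : t ∈ Ico 0.2 1) :
    omegaHObjective 13.15 t ≤ 0.0053 := by
  obtain ⟨ht0, ht1⟩ := ht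
  set s : ℝ := exp (-2 * 13.15 * t / 3) with hs
  have hs0 : 0 < s := exp_pos _
  have hs1 : s < 1 := exp_lt_one_iff.2 (by linarith)
  have hlog : log (3 - s) ≤ log 3 := log_le_log (by linarith) (by linarith)
  have htl2 : t * log 2 ≤ t * 0.6931471808 := by have := log_two_lt_d9; gcongr
  rw [omegaHObjective, ← hs]
  nlinarith [mul_nonneg (sub_nonneg.2 ht0) (sub_nonneg.2 ht1.le), log_two_gt_d9,
    log_three_bounds.2]

lemma omegaH_13_15_le : omegaH 13.15 ≤ 0.0053 := by
  refine omegaH_le fun t ⟨ht0, ht1⟩ => ?_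
  rcases le_or_gt t 0.065 with hsmall | hsmall
  · exact omegaHObjective_13_15_le_of_mem_Ioc ⟨ht0, hsmall⟩
  rcases le_or_gt t 0.2 with hmid | hmid
  · exact omegaHObjective_13_15_le_of_mem_Icc ⟨hsmall.le, hmid⟩
  · exact omegaHObjective_13_15_le_of_mem_Ico ⟨hmid.le, ht1⟩

lemma lt_omegaHObjective_13_16 : 0.0045 < omegaHObjective 13.16 0.015 := by
  have hexp : exp (-0.1316) ≤ 0.8767 := by
    have := (exp_neg_taylor_bounds (u := 0.1316) (by norm_num [abs_of_pos])).2
    norm_num at this ⊢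
    linarith
  have hlog : 0.0598 ≤ log (1 + 0.06165) := by
    have := (abs_le.1 (abs_log_one_add_sub_taylor_le (x := 0.06165) (by norm_num [abs_of_pos]))).1
    norm_num [abs_of_pos] at this ⊢
    linarith
  have hmono : log (2 * (1 + 0.06165)) ≤ log (3 - exp (-0.1316)) :=
    log_le_log (by norm_num) (by linarith)
  rw [log_mul two_ne_zero (by norm_num)] at hmono
  rw [omegaHObjective, show -2 * (13.16 : ℝ) * 0.015 / 3 = -0.1316 by norm_num]
  linarith [log_two_gt_d9]

theorem omegaH_threshold :
    ∃ cu : ℝ, 13.15 < cu ∧ cu < 13.16 ∧ omegaH cu + cu / 6 = 2 * Real.log 3 := by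
  have hcont : ContinuousOn (fun c => omegaH c + c / 6) (Icc 13.15 13.16) :=
    (lipschitzOnWith_omegaH.continuousOn.mono fun c hc => le_trans (by norm_num) hc.1).add
      (continuousOn_id.div_const 6)
  have hlow : omegaH 13.15 + 13.15 / 6 < 2 * log 3 := by
    linarith [omegaH_13_15_le, log_three_bounds.1]
  have hhigh : 2 * log 3 < omegaH 13.16 + 13.16 / 6 := by
    linarith [omegaHObjective_le_omegaH (c := 13.16) (t := 0.015) (by norm_num)
      ⟨by norm_num, by norm_num⟩, lt_omegaHObjective_13_16, log_three_bounds.2]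
  obtain ⟨cu, ⟨hcu₁, hcu₂⟩, hcu⟩ := intermediate_value_Ioo (by norm_num) hcont ⟨hlow, hhigh⟩
  exact ⟨cu, hcu₁, hcu₂, hcu⟩
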